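/- arXiv:1409.2835 — 2 statements merged into one kernel-verified Lean document; each statement's English description precedes it below -/
import Mathlib

section
/- The function P̃_{ν,i} extends continuously to the closed nonnegative orthant (ℝ≥0)^M, with value at points where p_i = 0 equal to Σ_{j∈N_i} (d_j · ln 2)/(K·B·g_{i,j}·ν_i) · (Σ_{k≠i} ν_k p_k g_{k,j} + σ²); the extension is concave and strictly positive. -/
/-!
For `x = p i * g i j` and `c = ∑ k ≠ i, ν k * p k * g k j + σ2`, both affine in `p`, the `j`-th
summand of `P̃` is a positive multiple of `x / log (1 + x / c) = c * φ (x / c)`, the perspective of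
`φ t = t / log (1 + t)`. Setting `φ 0 = 1` makes `φ` continuous on `[0, ∞)`, since
`1 ≤ φ t ≤ 1 + t / 2`; it is concave there because `φ''` has the sign of
`2 t - (2 + t) log (1 + t) ≤ 0`. Perspectives of concave functions are jointly concave, and
concavity survives affine substitution and nonnegative sums. Positivity follows from
`c * φ (x / c) ≥ c ≥ σ2 > 0`.
-/

open Real Set Filter Topology

-- The value `1` at `0` is the limit of `t / log (1 + t)`.
noncomputable def divLogOneAdd (t : ℝ) : ℝ := if t = 0 then 1 else t / log (1 + t)

lemma divLogOneAdd_of_ne_zero {t : ℝ} (ht : t ≠ 0) : divLogOneAdd t = t / log (1 + t) :=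
  if_neg ht

lemma one_le_divLogOneAdd {t : ℝ} (ht : 0 ≤ t) : 1 ≤ divLogOneAdd t := by
  rcases ht.eq_or_lt with rfl | ht
  · simp [divLogOneAdd]
  rw [divLogOneAdd_of_ne_zero ht.ne', one_le_div (log_pos (by linarith))]
  linarith [log_le_sub_one_of_pos (by linarith : 0 < 1 + t)]

lemma divLogOneAdd_le_one_add_div_two {t : ℝ} (ht : 0 ≤ t) : divLogOneAdd t ≤ 1 + t / 2 := by
  rcases ht.eq_or_lt with rfl | ht
  · simp [divLogOneAdd]
  have hlog := le_log_one_add_of_nonneg ht.le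
  rw [divLogOneAdd_of_ne_zero ht.ne', div_le_iff₀ (log_pos (by linarith))]
  rw [div_le_iff₀ (by linarith)] at hlog
  nlinarith

lemma hasDerivAt_log_one_add {t : ℝ} (ht : 1 + t ≠ 0) :
    HasDerivAt (fun t => log (1 + t)) (1 / (1 + t)) t := by
  simpa [one_div] using ((hasDerivAt_id t).const_add 1).log ht

lemma hasDerivAt_divLogOneAdd {t : ℝ} (ht : 0 < t) :
    HasDerivAt divLogOneAdd ((log (1 + t) - t / (1 + t)) / log (1 + t) ^ 2) t := by
  have hquot := (hasDerivAt_id t).div (hasDerivAt_log_one_add (by positivity))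
    (log_pos (by linarith)).ne'
  have heq : divLogOneAdd =ᶠ[𝓝 t] fun t => t / log (1 + t) := by
    filter_upwards [eventually_ne_nhds ht.ne'] with s hs using divLogOneAdd_of_ne_zero hs
  refine (hquot.congr_of_eventuallyEq heq).congr_deriv ?_
  simp only [id]
  ring

lemma hasDerivAt_deriv_divLogOneAdd {t : ℝ} (ht : 0 < t) :
    HasDerivAt (fun t => (log (1 + t) - t / (1 + t)) / log (1 + t) ^ 2)
      ((2 * t - (2 + t) * log (1 + t)) / ((1 + t) ^ 2 * log (1 + t) ^ 3)) t := by
  have h1 : 1 + t ≠ 0 := by positivity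
  have hL : log (1 + t) ≠ 0 := (log_pos (by linarith)).ne'
  have hnum := (hasDerivAt_log_one_add h1).sub
    ((hasDerivAt_id t).div ((hasDerivAt_id t).const_add 1) h1)
  have hden := (hasDerivAt_log_one_add h1).pow 2
  refine (hnum.div hden (pow_ne_zero 2 hL)).congr_deriv ?_
  simp only [Pi.sub_apply, Pi.div_apply, Pi.pow_apply, id]
  field_simp
  ring

lemma continuousOn_divLogOneAdd : ContinuousOn divLogOneAdd (Ici 0) := by
  intro t ht
  rcases (mem_Ici.mp ht).eq_or_lt with rfl | ht
  · have hupper : Tendsto (fun t : ℝ => 1 + t / 2) (𝓝[Ici 0] 0) (𝓝 1) :=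
      ((by fun_prop : Continuous fun t : ℝ => 1 + t / 2).tendsto' 0 1 (by norm_num)).mono_left
        nhdsWithin_le_nhds
    rw [ContinuousWithinAt, show divLogOneAdd 0 = 1 from if_pos rfl]
    exact tendsto_of_tendsto_of_tendsto_of_le_of_le' tendsto_const_nhds hupper
      (eventually_nhdsWithin_of_forall fun t ht => one_le_divLogOneAdd ht)
      (eventually_nhdsWithin_of_forall fun t ht => divLogOneAdd_le_one_add_div_two ht)
  · exact (hasDerivAt_divLogOneAdd ht).continuousAt.continuousWithinAt

lemma concaveOn_divLogOneAdd : ConcaveOn ℝ (Ici 0) divLogOneAdd := by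
  refine concaveOn_of_hasDerivWithinAt2_nonpos (convex_Ici 0) continuousOn_divLogOneAdd
    (f' := fun t => (log (1 + t) - t / (1 + t)) / log (1 + t) ^ 2)
    (f'' := fun t => (2 * t - (2 + t) * log (1 + t)) / ((1 + t) ^ 2 * log (1 + t) ^ 3))
    (fun t ht => ?_) (fun t ht => ?_) (fun t ht => ?_) <;> rw [interior_Ici] at ht
  · exact (hasDerivAt_divLogOneAdd ht).hasDerivWithinAt
  · exact (hasDerivAt_deriv_divLogOneAdd ht).hasDerivWithinAt
  · have ht : 0 < t := ht
    have hkey : 2 * t ≤ (2 + t) * log (1 + t) := by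
      have := le_log_one_add_of_nonneg ht.le
      rw [div_le_iff₀ (by linarith)] at this
      linarith
    exact div_nonpos_of_nonpos_of_nonneg (by linarith)
      (mul_nonneg (sq_nonneg _) (pow_nonneg (log_pos (by linarith)).le 3))

section Perspective

variable {E : Type*} [AddCommGroup E] [Module ℝ E]

noncomputable def perspective (f : E → ℝ) (q : E × ℝ) : ℝ := q.2 * f (q.2⁻¹ • q.1)

def perspectiveDomain (s : Set E) : Set (E × ℝ) := {q | 0 < q.2 ∧ q.2⁻¹ • q.1 ∈ s}

lemma mem_perspectiveDomain {s : Set E} {q : E × ℝ} :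
    q ∈ perspectiveDomain s ↔ 0 < q.2 ∧ q.2⁻¹ • q.1 ∈ s :=
  Iff.rfl

lemma inv_smul_combo_eq_combo_inv_smul {x₁ x₂ : E} {c₁ c₂ a b : ℝ} (hc₁ : c₁ ≠ 0) (hc₂ : c₂ ≠ 0)
    (hc : a * c₁ + b * c₂ ≠ 0) :
    (a * c₁ + b * c₂)⁻¹ • (a • x₁ + b • x₂) =
      (a * c₁ / (a * c₁ + b * c₂)) • (c₁⁻¹ • x₁) + (b * c₂ / (a * c₁ + b * c₂)) • (c₂⁻¹ • x₂) := by
  simp only [smul_add, smul_smul]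
  congr 2 <;> field_simp

lemma convex_perspective_domain {s : Set E} (hs : Convex ℝ s) :
    Convex ℝ (perspectiveDomain s) := by
  rintro ⟨x₁, c₁⟩ ⟨hc₁ : 0 < c₁, hx₁ : c₁⁻¹ • x₁ ∈ s⟩ ⟨x₂, c₂⟩ ⟨hc₂ : 0 < c₂, hx₂ : c₂⁻¹ • x₂ ∈ s⟩
    a b ha hb hab
  have hc : 0 < a * c₁ + b * c₂ := convex_Ioi (0 : ℝ) hc₁ hc₂ ha hb hab
  refine ⟨hc, ?_⟩
  simp only [Prod.fst_add, Prod.snd_add, Prod.smul_fst, Prod.smul_snd, smul_eq_mul]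
  rw [inv_smul_combo_eq_combo_inv_smul hc₁.ne' hc₂.ne' hc.ne']
  exact hs hx₁ hx₂ (by positivity) (by positivity) (by rw [← add_div, div_self hc.ne'])

theorem ConcaveOn.perspective {s : Set E} {f : E → ℝ} (hf : ConcaveOn ℝ s f) :
    ConcaveOn ℝ (perspectiveDomain s) (perspective f) := by
  refine ⟨convex_perspective_domain hf.1, ?_⟩
  rintro ⟨x₁, c₁⟩ ⟨hc₁ : 0 < c₁, hx₁ : c₁⁻¹ • x₁ ∈ s⟩ ⟨x₂, c₂⟩ ⟨hc₂ : 0 < c₂, hx₂ : c₂⁻¹ • x₂ ∈ s⟩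
    a b ha hb hab
  have hc : 0 < a * c₁ + b * c₂ := convex_Ioi (0 : ℝ) hc₁ hc₂ ha hb hab
  have hf_le := hf.2 hx₁ hx₂ (by positivity : 0 ≤ a * c₁ / (a * c₁ + b * c₂))
    (by positivity : 0 ≤ b * c₂ / (a * c₁ + b * c₂)) (by rw [← add_div, div_self hc.ne'])
  simp only [_root_.perspective, Prod.fst_add, Prod.snd_add, Prod.smul_fst, Prod.smul_snd,
    smul_eq_mul]
  rw [inv_smul_combo_eq_combo_inv_smul hc₁.ne' hc₂.ne' hc.ne']
  calc a * (c₁ * f (c₁⁻¹ • x₁)) + b * (c₂ * f (c₂⁻¹ • x₂))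
      = (a * c₁ + b * c₂) * ((a * c₁ / (a * c₁ + b * c₂)) * f (c₁⁻¹ • x₁) +
          (b * c₂ / (a * c₁ + b * c₂)) * f (c₂⁻¹ • x₂)) := by
        field_simp
    _ ≤ _ := mul_le_mul_of_nonneg_left hf_le hc.le

theorem ContinuousOn.perspective [TopologicalSpace E] [ContinuousSMul ℝ E] {s : Set E}
    {f : E → ℝ} (hf : ContinuousOn f s) :
    ContinuousOn (perspective f) (perspectiveDomain s) := by
  have hinv : ContinuousOn (fun q : E × ℝ => q.2⁻¹ • q.1) (perspectiveDomain s) :=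
    (continuousOn_snd.inv₀ fun q hq => hq.1.ne').smul continuousOn_fst
  exact continuousOn_snd.mul (hf.comp hinv fun q hq => hq.2)

end Perspective

lemma perspective_divLogOneAdd_zero (c : ℝ) : perspective divLogOneAdd (0, c) = c := by
  simp [perspective, divLogOneAdd]

lemma perspective_divLogOneAdd_of_ne_zero {x c : ℝ} (hx : x ≠ 0) (hc : c ≠ 0) :
    perspective divLogOneAdd (x, c) = x / log (1 + x / c) := by
  rw [perspective, smul_eq_mul, divLogOneAdd_of_ne_zero (by positivity), inv_mul_eq_div,
    ← mul_div_assoc, mul_div_cancel₀ x hc]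

lemma le_perspective_divLogOneAdd {q : ℝ × ℝ} (hq : q ∈ perspectiveDomain (Ici 0)) :
    q.2 ≤ perspective divLogOneAdd q :=
  le_mul_of_one_le_right hq.1.le (one_le_divLogOneAdd hq.2)

lemma mul_perspective_divLogOneAdd_eq {P g c ν d K B : ℝ} (hP : 0 < P) (hg : 0 < g) (hc : 0 < c)
    (hν : ν ≠ 0) (hK : K ≠ 0) (hB : B ≠ 0) :
    d * log 2 / (K * B * g * ν) * perspective divLogOneAdd (P * g, c) =
      P / ν * (d / (K * B * (log (1 + P * g / c) / log 2))) := by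
  have hPg := mul_pos hP hg
  rw [perspective_divLogOneAdd_of_ne_zero hPg.ne' hc.ne']
  have hL := log_pos (lt_add_of_pos_right 1 (div_pos hPg hc))
  generalize log (1 + _ / _) = L at hL ⊢
  have := log_pos one_lt_two
  field_simp

lemma concaveOn_finset_sum {𝕜 E β ι : Type*} [Semiring 𝕜] [PartialOrder 𝕜] [AddCommMonoid E]
    [AddCommMonoid β] [PartialOrder β] [IsOrderedAddMonoid β] [SMul 𝕜 E] [Module 𝕜 β]
    {s : Set E} (hs : Convex 𝕜 s) (t : Finset ι) {f : ι → E → β}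
    (hf : ∀ j ∈ t, ConcaveOn 𝕜 s (f j)) : ConcaveOn 𝕜 s fun x => ∑ j ∈ t, f j x := by
  simp_rw [← Finset.sum_apply]
  exact Finset.sum_induction _ (ConcaveOn 𝕜 s) (fun _ _ => ConcaveOn.add) (concaveOn_const 0 hs) hf

section SignalInterference

variable {ι κ : Type*} [Fintype ι] [DecidableEq ι]

noncomputable def signalInterferenceMap (i : ι) (g : ι → κ → ℝ) (ν : ι → ℝ) (σ2 : ℝ) (j : κ) :
    (ι → ℝ) →ᵃ[ℝ] ℝ × ℝ :=
  (((LinearMap.proj i).smulRight (g i j)).prod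
      (∑ k ∈ Finset.univ.erase i, (LinearMap.proj k).smulRight (ν k * g k j))).toAffineMap +
    AffineMap.const ℝ _ (0, σ2)

lemma signalInterferenceMap_apply (i : ι) (g : ι → κ → ℝ) (ν : ι → ℝ) (σ2 : ℝ) (j : κ)
    (p : ι → ℝ) :
    signalInterferenceMap i g ν σ2 j p =
      (p i * g i j, ∑ k ∈ Finset.univ.erase i, ν k * p k * g k j + σ2) := by
  simp only [signalInterferenceMap, AffineMap.coe_add, LinearMap.coe_toAffineMap,
    AffineMap.coe_const, Pi.add_apply, LinearMap.prod_apply, LinearMap.coe_smulRight,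
    LinearMap.coe_proj, Function.eval, smul_eq_mul, Function.prod_apply, LinearMap.sum_apply,
    Function.const_apply, Prod.mk_add_mk, add_zero]
  congr 2
  exact Finset.sum_congr rfl fun k _ => by ring

lemma mapsTo_signalInterferenceMap {i : ι} {g : ι → κ → ℝ} {ν : ι → ℝ} {σ2 : ℝ} {j : κ}
    (hν : ∀ k, 0 ≤ ν k) (hg : ∀ k, 0 ≤ g k j) (hσ : 0 < σ2) :
    MapsTo (signalInterferenceMap i g ν σ2 j) {p | ∀ k, 0 ≤ p k}
      (perspectiveDomain (Ici 0)) := by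
  intro p hp
  rw [mem_perspectiveDomain, signalInterferenceMap_apply]
  have hI : 0 < ∑ k ∈ Finset.univ.erase i, ν k * p k * g k j + σ2 := by
    have := Finset.sum_nonneg fun k (_ : k ∈ Finset.univ.erase i) =>
      mul_nonneg (mul_nonneg (hν k) (hp k)) (hg k)
    linarith
  exact ⟨hI, smul_nonneg (inv_nonneg.mpr hI.le) (mul_nonneg (hp i) (hg i))⟩

end SignalInterference

theorem power_function_extension (M N : ℕ) (i : Fin M)
    (Ni : Finset (Fin N)) (hNi : Ni.Nonempty)
    (d : Fin N → ℝ) (g : Fin M → Fin N → ℝ)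
    (ν : Fin M → ℝ) (B K σ2 : ℝ)
    (hν : ∀ k, 0 < ν k) (hd : ∀ j, 0 < d j) (hg : ∀ k j, 0 < g k j)
    (hB : 0 < B) (hK : 0 < K) (hσ : 0 < σ2) :
    ∃ F : (Fin M → ℝ) → ℝ,
      ContinuousOn F {p : Fin M → ℝ | ∀ k, 0 ≤ p k} ∧
      (∀ p : Fin M → ℝ, (∀ k, 0 < p k) →
        F p = (p i / ν i) * ∑ j ∈ Ni, d j / (K * B *
          (Real.log (1 + p i * g i j /
            (∑ k ∈ Finset.univ.erase i, ν k * p k * g k j + σ2)) / Real.log 2))) ∧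
      (∀ p : Fin M → ℝ, (∀ k, 0 ≤ p k) → p i = 0 →
        F p = ∑ j ∈ Ni, (d j * Real.log 2) / (K * B * g i j * ν i) *
          (∑ k ∈ Finset.univ.erase i, ν k * p k * g k j + σ2)) ∧
      ConcaveOn ℝ {p : Fin M → ℝ | ∀ k, 0 ≤ p k} F ∧
      (∀ p : Fin M → ℝ, (∀ k, 0 ≤ p k) → 0 < F p) := by
  set ℓ := signalInterferenceMap i g ν σ2
  set A : Fin N → ℝ := fun j => d j * log 2 / (K * B * g i j * ν i)
  have hA : ∀ j, 0 < A j := fun j => by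
    have := hd j; have := hg i j; have := hν i; have := log_pos one_lt_two; positivity
  have hℓ : ∀ j, MapsTo (ℓ j) {p | ∀ k, 0 ≤ p k} (perspectiveDomain (Ici 0)) :=
    fun j => mapsTo_signalInterferenceMap (fun k => (hν k).le) (fun k => (hg k j).le) hσ
  refine ⟨fun p => ∑ j ∈ Ni, A j * perspective divLogOneAdd (ℓ j p), ?_, ?_, ?_, ?_, ?_⟩
  · exact continuousOn_finsetSum _ fun j _ => continuousOn_const.mul
      (continuousOn_divLogOneAdd.perspective.comp
        (ℓ j).continuous_of_finiteDimensional.continuousOn (hℓ j))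
  · intro p hp
    have hI := fun j => (hℓ j fun k => (hp k).le).1
    simp only [ℓ, signalInterferenceMap_apply] at hI ⊢
    rw [Finset.mul_sum]
    exact Finset.sum_congr rfl fun j _ =>
      mul_perspective_divLogOneAdd_eq (hp i) (hg i j) (hI j) (hν i).ne' hK.ne' hB.ne'
  · intro p _ hpi
    simp only [ℓ, signalInterferenceMap_apply, hpi, zero_mul, perspective_divLogOneAdd_zero, A]
  · exact concaveOn_finset_sum (convex_Ici 0) Ni fun j _ =>
      ((concaveOn_divLogOneAdd.perspective.comp_affineMap (ℓ j)).subset (hℓ j)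
        (convex_Ici 0)).smul (hA j).le
  · exact fun p hp => Finset.sum_pos (fun j _ => mul_pos (hA j)
      ((hℓ j hp).1.trans_le (le_perspective_divLogOneAdd (hℓ j hp)))) hNi
end

section
/- Under the assumptions above, the new total per-base-station transmit powers satisfy ν''_i · p''_i < ν'_i · p'_i for every i; i.e., increasing the induced load strictly decreases the total transmit power at every base station. -/
/-!
Write `q = ν * p` for the load-weighted powers and let `ρ = max_k q''_k / q'_k`, attained at `m`.
If `ρ ≥ 1`, the interference seen by cell `m` grows at most by the factor `ρ` while its own
weighted power grows exactly by `ρ`, so every SINR of cell `m` satisfies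
`sinr'' ≥ (ν'_m / ν''_m) · sinr'`. Concavity of `x ↦ log (1 + x)` then bounds the resource
blocks cell `m` needs by `ν''_m / ν'_m` times those it needed before, i.e. by `ν''_m`; the
fixed point equation says they are exactly `ν''_m`, so no inequality can be strict. That forces
`q'' = ρ q'`, which makes every cell a maximiser, and at a cell whose load grew strictly the
concavity inequality is strict, a contradiction. Hence `ρ < 1`.
-/

/-- Component `i` of the power interference mapping `P_ν` (on strictly
positive power vectors, where the closed-form expression applies). -/
noncomputable def Pfun (M N : ℕ) (Ni : Fin M → Finset (Fin N))
    (d : Fin N → ℝ) (g : Fin M → Fin N → ℝ) (B K σ2 : ℝ)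
    (ν : Fin M → ℝ) (i : Fin M) (p : Fin M → ℝ) : ℝ :=
  (p i / ν i) * ∑ j ∈ Ni i, d j / (K * B *
    (Real.log (1 + p i * g i j /
      (∑ k ∈ Finset.univ.erase i, ν k * p k * g k j + σ2)) / Real.log 2))

open Finset Real

section Interference

variable {ι κ : Type*} [Fintype ι] [DecidableEq ι]

/-- Interference plus noise on resource `j` of cell `i`. Cell `k` transmits on a fraction of
its resource blocks, so it interferes with its load-weighted power `q k = ν k * p k`. -/
noncomputable def interference (g : ι → κ → ℝ) (σ2 : ℝ) (q : ι → ℝ) (i : ι) (j : κ) : ℝ :=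
  ∑ k ∈ univ.erase i, q k * g k j + σ2

noncomputable def sinr (g : ι → κ → ℝ) (σ2 : ℝ) (ν p : ι → ℝ) (i : ι) (j : κ) : ℝ :=
  p i * g i j / interference g σ2 (ν * p) i j

variable {g : ι → κ → ℝ} {σ2 ρ : ℝ} {q q' q'' : ι → ℝ} {i : ι} {j : κ}

lemma interference_pos (hg : ∀ k j, 0 ≤ g k j) (hσ : 0 < σ2) (hq : ∀ k, 0 ≤ q k) :
    0 < interference g σ2 q i j :=
  add_pos_of_nonneg_of_pos (sum_nonneg fun k _ => mul_nonneg (hq k) (hg k j)) hσ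

lemma interference_le (hg : ∀ k j, 0 ≤ g k j) (hσ : 0 ≤ σ2) (hρ : 1 ≤ ρ)
    (hq : ∀ k, q'' k ≤ ρ * q' k) :
    interference g σ2 q'' i j ≤ ρ * interference g σ2 q' i j := by
  rw [interference, interference, mul_add, mul_sum]
  refine add_le_add (sum_le_sum fun k _ => ?_) (le_mul_of_one_le_left hσ hρ)
  rw [← mul_assoc]; exact mul_le_mul_of_nonneg_right (hq k) (hg k j)

lemma interference_lt (hg : ∀ k j, 0 < g k j) (hσ : 0 ≤ σ2) (hρ : 1 ≤ ρ)
    (hq : ∀ k, q'' k ≤ ρ * q' k) {k : ι} (hki : k ≠ i) (hqk : q'' k < ρ * q' k) :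
    interference g σ2 q'' i j < ρ * interference g σ2 q' i j := by
  rw [interference, interference, mul_add, mul_sum]
  refine add_lt_add_of_lt_of_le (sum_lt_sum (fun l _ => ?_) ⟨k, mem_erase.2 ⟨hki, mem_univ k⟩, ?_⟩)
    (le_mul_of_one_le_left hσ hρ)
  · rw [← mul_assoc]; exact mul_le_mul_of_nonneg_right (hq l) (hg l j).le
  · rw [← mul_assoc]; exact mul_lt_mul_of_pos_right hqk (hg k j)

lemma sinr_pos {ν p : ι → ℝ} (hg : ∀ k j, 0 < g k j) (hσ : 0 < σ2) (hν : ∀ k, 0 < ν k)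
    (hp : ∀ k, 0 < p k) : 0 < sinr g σ2 ν p i j :=
  div_pos (mul_pos (hp i) (hg i j))
    (interference_pos (fun k j => (hg k j).le) hσ fun k => (mul_pos (hν k) (hp k)).le)

/-- Scaling the old SINR by the load ratio amounts to giving cell `i` its new power and scaling
the old interference by `ρ`. -/
lemma div_mul_sinr_eq {ν' ν'' p' p'' : ι → ℝ} (hν'' : ν'' i ≠ 0) (hρ : ρ ≠ 0)
    (hi : ν'' i * p'' i = ρ * (ν' i * p' i)) :
    ν' i / ν'' i * sinr g σ2 ν' p' i j =
      p'' i * g i j / (ρ * interference g σ2 (ν' * p') i j) := by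
  have hp'' : p'' i = ρ * (ν' i * p' i) / ν'' i := by rw [← hi]; field_simp
  rw [sinr, hp'']
  field_simp

end Interference

lemma mul_log_one_add_le_log_one_add_mul {t x : ℝ} (ht₀ : 0 ≤ t) (ht₁ : t ≤ 1) (hx : -1 < x) :
    t * log (1 + x) ≤ log (1 + t * x) := by
  have h := strictConcaveOn_log_Ioi.concaveOn.2 (Set.mem_Ioi.2 one_pos)
    (Set.mem_Ioi.2 (by linarith : (0 : ℝ) < 1 + x)) (sub_nonneg.2 ht₁) ht₀ (by ring)
  simp only [smul_eq_mul, log_one, mul_zero, zero_add] at h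
  rwa [show (1 - t) * 1 + t * (1 + x) = 1 + t * x by ring] at h

lemma mul_log_one_add_lt_log_one_add_mul {t x : ℝ} (ht₀ : 0 < t) (ht₁ : t < 1) (hx : -1 < x)
    (hx₀ : x ≠ 0) : t * log (1 + x) < log (1 + t * x) := by
  have h := strictConcaveOn_log_Ioi.2 (Set.mem_Ioi.2 one_pos)
    (Set.mem_Ioi.2 (by linarith : (0 : ℝ) < 1 + x)) (by simpa using hx₀)
    (sub_pos.2 ht₁) ht₀ (by ring)
  simp only [smul_eq_mul, log_one, mul_zero, zero_add] at h
  rwa [show (1 - t) * 1 + t * (1 + x) = 1 + t * x by ring] at h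

lemma mul_logb_one_add_lt_logb_one_add {b t x y : ℝ} (hb : 1 < b) (ht₀ : 0 < t) (ht₁ : t ≤ 1)
    (hx : 0 < x) (hxy : t * x ≤ y) (hstrict : t < 1 ∨ t * x < y) :
    t * logb b (1 + x) < logb b (1 + y) := by
  have htx : 0 < 1 + t * x := by positivity
  have hlog : t * log (1 + x) < log (1 + y) := by
    rcases hstrict with ht | htxy
    · exact (mul_log_one_add_lt_log_one_add_mul ht₀ ht (by linarith) hx.ne').trans_le
        (log_le_log htx (by linarith))
    · exact (mul_log_one_add_le_log_one_add_mul ht₀.le ht₁ (by linarith)).trans_lt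
        (log_lt_log htx (by linarith))
  rw [logb, logb, ← mul_div_assoc]
  exact div_lt_div_of_pos_right hlog (log_pos hb)

lemma sum_div_lt_inv_mul_sum_div {κ : Type*} {s : Finset κ} (hs : s.Nonempty) {c u v : κ → ℝ}
    {t : ℝ} (ht : 0 < t) (hc : ∀ j ∈ s, 0 < c j) (hu : ∀ j ∈ s, 0 < u j)
    (huv : ∀ j ∈ s, t * u j < v j) :
    ∑ j ∈ s, c j / v j < t⁻¹ * ∑ j ∈ s, c j / u j := by
  rw [mul_sum]
  refine sum_lt_sum_of_nonempty hs fun j hj => ?_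
  have := hu j hj
  calc c j / v j < c j / (t * u j) := div_lt_div_of_pos_left (hc j hj) (by positivity) (huv j hj)
    _ = t⁻¹ * (c j / u j) := by field_simp

lemma exists_max_ratio {ι : Type*} [Finite ι] [Nonempty ι] (a b : ι → ℝ) (hb : ∀ k, 0 < b k) :
    ∃ ρ m, (∀ k, a k ≤ ρ * b k) ∧ a m = ρ * b m := by
  obtain ⟨m, hm⟩ := Finite.exists_max fun k => a k / b k
  exact ⟨a m / b m, m, fun k => (div_le_iff₀ (hb k)).1 (hm k),
    (div_mul_cancel₀ _ (hb m).ne').symm⟩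

section FixedPoint

variable {M N : ℕ} {Ni : Fin M → Finset (Fin N)} {d : Fin N → ℝ} {g : Fin M → Fin N → ℝ}
  {B K σ2 : ℝ}

/-- `d j / (K * B * logb 2 (1 + sinr …))` is the number of resource blocks cell `i` needs to
carry the demand `d j`; at a fixed point these add up to the load `ν i`. -/
lemma sum_blocks_eq_load {ν p : Fin M → ℝ} {i : Fin M} (hν : ν i ≠ 0) (hp : p i ≠ 0)
    (hfix : Pfun M N Ni d g B K σ2 ν i p = p i) :
    ∑ j ∈ Ni i, d j / (K * B * logb 2 (1 + sinr g σ2 ν p i j)) = ν i := by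
  have h : p i / ν i * ∑ j ∈ Ni i, d j / (K * B * logb 2 (1 + sinr g σ2 ν p i j)) = p i := hfix
  exact mul_left_cancel₀ (div_ne_zero hp hν) (h.trans (div_mul_cancel₀ _ hν).symm)

variable {ν' ν'' p' p'' : Fin M → ℝ}

theorem load_le_and_ratio_eq_of_max_ratio (hNi : ∀ i, (Ni i).Nonempty) (hd : ∀ j, 0 < d j)
    (hg : ∀ k j, 0 < g k j) (hB : 0 < B) (hK : 0 < K) (hσ : 0 < σ2)
    (hν' : ∀ i, 0 < ν' i) (hν'' : ∀ i, 0 < ν'' i) (hp' : ∀ i, 0 < p' i)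
    (hp'' : ∀ i, 0 < p'' i) {m : Fin M} (hfix' : Pfun M N Ni d g B K σ2 ν' m p' = p' m)
    (hfix'' : Pfun M N Ni d g B K σ2 ν'' m p'' = p'' m) (hle : ν' m ≤ ν'' m) {ρ : ℝ}
    (hρ : 1 ≤ ρ) (hq : ∀ k, ν'' k * p'' k ≤ ρ * (ν' k * p' k))
    (hm : ν'' m * p'' m = ρ * (ν' m * p' m)) :
    ν'' m ≤ ν' m ∧ ∀ k ≠ m, ρ * (ν' k * p' k) ≤ ν'' k * p'' k := by
  by_contra! hrigid
  have hstrict : ν' m < ν'' m ∨ ∃ k ≠ m, ν'' k * p'' k < ρ * (ν' k * p' k) := by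
    rw [or_iff_not_imp_left, not_lt]; exact hrigid
  set t := ν' m / ν'' m
  have ht₀ : 0 < t := div_pos (hν' m) (hν'' m)
  have ht₁ : t ≤ 1 := (div_le_one (hν'' m)).2 hle
  have hI'' : ∀ j, 0 < interference g σ2 (ν'' * p'') m j := fun j =>
    interference_pos (fun k j => (hg k j).le) hσ fun k => (mul_pos (hν'' k) (hp'' k)).le
  have hsinr : ∀ j, t * sinr g σ2 ν' p' m j = p'' m * g m j /
      (ρ * interference g σ2 (ν' * p') m j) := fun j =>
    div_mul_sinr_eq (hν'' m).ne' (by linarith) hm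
  have hlogb : ∀ j, t * logb 2 (1 + sinr g σ2 ν' p' m j) <
      logb 2 (1 + sinr g σ2 ν'' p'' m j) := by
    intro j
    have hnum := mul_pos (hp'' m) (hg m j)
    have hsinr_le : t * sinr g σ2 ν' p' m j ≤ sinr g σ2 ν'' p'' m j := by
      rw [hsinr]
      exact div_le_div_of_nonneg_left hnum.le (hI'' j)
        (interference_le (fun k j => (hg k j).le) hσ.le hρ hq)
    refine mul_logb_one_add_lt_logb_one_add one_lt_two ht₀ ht₁
      (sinr_pos hg hσ hν' hp') hsinr_le ?_
    rcases hstrict with hlt | ⟨k, hkm, hqk⟩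
    · exact Or.inl ((div_lt_one (hν'' m)).2 hlt)
    · refine Or.inr ?_
      rw [hsinr]
      exact div_lt_div_of_pos_left hnum (hI'' j) (interference_lt hg hσ.le hρ hq hkm hqk)
  have hsum := sum_div_lt_inv_mul_sum_div (hNi m) ht₀ (fun j _ => hd j)
    (fun j _ => mul_pos (mul_pos hK hB) (logb_pos one_lt_two
      (lt_add_of_pos_right 1 (sinr_pos hg hσ hν' hp'))))
    (fun j _ => by rw [mul_left_comm]; exact mul_lt_mul_of_pos_left (hlogb j) (mul_pos hK hB))
  rw [sum_blocks_eq_load (hν'' m).ne' (hp'' m).ne' hfix'',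
    sum_blocks_eq_load (hν' m).ne' (hp' m).ne' hfix', inv_div,
    div_mul_cancel₀ _ (hν' m).ne'] at hsum
  exact lt_irrefl _ hsum

end FixedPoint

theorem total_power_strictly_decreases (M N : ℕ)
    (Ni : Fin M → Finset (Fin N)) (hNi : ∀ i, (Ni i).Nonempty)
    (d : Fin N → ℝ) (g : Fin M → Fin N → ℝ) (B K σ2 : ℝ)
    (hd : ∀ j, 0 < d j) (hg : ∀ k j, 0 < g k j)
    (hB : 0 < B) (hK : 0 < K) (hσ : 0 < σ2)
    (ν' ν'' p' p'' : Fin M → ℝ)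
    (hν' : ∀ i, 0 < ν' i) (hp' : ∀ i, 0 < p' i) (hp'' : ∀ i, 0 < p'' i)
    (hfix' : ∀ i, Pfun M N Ni d g B K σ2 ν' i p' = p' i)
    (hfix'' : ∀ i, Pfun M N Ni d g B K σ2 ν'' i p'' = p'' i)
    (hle : ∀ i, ν' i ≤ ν'' i) (hne : ν'' ≠ ν') :
    ∀ i, ν'' i * p'' i < ν' i * p' i := by
  intro i
  have hν'' : ∀ k, 0 < ν'' k := fun k => (hν' k).trans_le (hle k)
  have hq' : ∀ k, 0 < ν' k * p' k := fun k => mul_pos (hν' k) (hp' k)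
  have : Nonempty (Fin M) := ⟨i⟩
  obtain ⟨ρ, m, hq, hm⟩ := exists_max_ratio (fun k => ν'' k * p'' k) _ hq'
  suffices hρ : ρ < 1 from (hq i).trans_lt (mul_lt_of_lt_one_left (hq' i) hρ)
  by_contra! hρ
  have rigid := fun {k} (hk : ν'' k * p'' k = ρ * (ν' k * p' k)) =>
    load_le_and_ratio_eq_of_max_ratio hNi hd hg hB hK hσ hν' hν'' hp' hp'' (hfix' k) (hfix'' k)
      (hle k) hρ hq hk
  obtain ⟨k, hk⟩ : ∃ k, ν' k ≠ ν'' k := by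
    by_contra! h
    exact hne (funext fun k => (h k).symm)
  have hk_max : ν'' k * p'' k = ρ * (ν' k * p' k) := by
    rcases eq_or_ne k m with rfl | hkm
    · exact hm
    · exact (hq k).antisymm ((rigid hm).2 k hkm)
  exact hk ((hle k).antisymm (rigid hk_max).1)
end
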